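/- arXiv:math/0311230 — 2 statements merged into one kernel-verified Lean document; each statement's English description precedes it below -/
import Mathlib

section
/- A partition λ₀ ≤ λ₁ ≤ ⋯ ≤ λₙ of m is a weakM-partition if and only if λᵢ ≤ 1 + λ₀ + ⋯ + λ_{i−1} for every i ≤ n. -/
/-!
If every part is at most one more than the sum of the smaller ones, the sums of the first `k`
parts fill `[0, λ₀ + ⋯ + λ_{k-1}]` by induction on `k`: a target beyond the previous range is
reached by adding `λ_k` to a smaller target. Conversely, if `λᵢ > 1 + λ₀ + ⋯ + λ_{i-1}`, a subset
with sum `λ₀ + ⋯ + λ_{i-1} + 1 < λᵢ` cannot use any part of index `≥ i`, as those are all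
`≥ λᵢ`, so its sum is at most `λ₀ + ⋯ + λ_{i-1}`.
-/

open Finset

theorem exists_subset_range_sum_eq_of_le_one_add_sum (lam : ℕ → ℕ) (k : ℕ)
    (h : ∀ i < k, lam i ≤ 1 + ∑ j ∈ range i, lam j) :
    ∀ l ≤ ∑ i ∈ range k, lam i, ∃ I ⊆ range k, ∑ i ∈ I, lam i = l := by
  induction k with
  | zero =>
    intro l hl
    rw [sum_range_zero, Nat.le_zero] at hl
    exact ⟨∅, empty_subset _, by simp [hl]⟩
  | succ k ih =>
    have ih := ih fun i hi => h i (by omega)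
    intro l hl
    rw [sum_range_succ] at hl
    by_cases hsmall : l ≤ ∑ i ∈ range k, lam i
    · obtain ⟨I, hI, hIsum⟩ := ih l hsmall
      exact ⟨I, hI.trans (range_subset_range.2 k.le_succ), hIsum⟩
    · have hk := h k k.lt_succ_self
      obtain ⟨I, hI, hIsum⟩ := ih (l - lam k) (by omega)
      have hkI : k ∉ I := fun hk' => by simpa using hI hk'
      refine ⟨insert k I, ?_, ?_⟩
      · rw [range_add_one]
        exact insert_subset_insert k hI
      · rw [sum_insert hkI, hIsum]
        omega

theorem subset_range_of_sum_lt {lam : ℕ → ℕ} {n i : ℕ}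
    (hmono : ∀ i j, i ≤ j → j ≤ n → lam i ≤ lam j) {I : Finset ℕ} (hI : I ⊆ range (n + 1))
    (hlt : ∑ j ∈ I, lam j < lam i) : I ⊆ range i := by
  intro j hj
  have hjn : j < n + 1 := mem_range.1 (hI hj)
  rw [mem_range]
  by_contra! hij
  have hj_le_sum : lam j ≤ ∑ k ∈ I, lam k := single_le_sum (fun k _ => Nat.zero_le _) hj
  have := hmono i j hij (by omega)
  omega

theorem le_one_add_sum_of_forall_exists_subset_sum_eq {lam : ℕ → ℕ} {n : ℕ}
    (hmono : ∀ i j, i ≤ j → j ≤ n → lam i ≤ lam j)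
    (h : ∀ l ≤ ∑ i ∈ range (n + 1), lam i, ∃ I ⊆ range (n + 1), ∑ i ∈ I, lam i = l)
    {i : ℕ} (hi : i ≤ n) : lam i ≤ 1 + ∑ j ∈ range i, lam j := by
  by_contra! hbig
  have hprefix : ∑ j ∈ range i, lam j + lam i ≤ ∑ j ∈ range (n + 1), lam j := by
    rw [← sum_range_succ]
    exact sum_le_sum_of_subset (range_subset_range.2 (by omega))
  obtain ⟨I, hI, hIsum⟩ := h (∑ j ∈ range i, lam j + 1) (by omega)
  have hIi : I ⊆ range i := subset_range_of_sum_lt hmono hI (by omega)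
  have := sum_le_sum_of_subset hIi (f := lam)
  omega

theorem weakM_iff_inequalities_general (m n : ℕ) (lam : ℕ → ℕ)
    (hmono : ∀ i j, i ≤ j → j ≤ n → lam i ≤ lam j)
    (hsum : ∑ i ∈ Finset.range (n + 1), lam i = m) :
    (∀ l ≤ m, ∃ I ⊆ Finset.range (n + 1), ∑ i ∈ I, lam i = l) ↔
    (∀ i ≤ n, lam i ≤ 1 + ∑ j ∈ Finset.range i, lam j) := by
  subst hsum
  exact ⟨fun h _ hi => le_one_add_sum_of_forall_exists_subset_sum_eq hmono h hi,
    fun h => exists_subset_range_sum_eq_of_le_one_add_sum lam (n + 1) fun i hi => h i (by omega)⟩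

/-- A partition λ₀ ≤ ⋯ ≤ λₙ of m is a weakM-partition if and only if
λᵢ ≤ 1 + λ₀ + ⋯ + λ_{i−1} for every i ≤ n. -/
theorem weakM_iff_inequalities (m n : ℕ) (lam : ℕ → ℕ)
    (hpos : ∀ i ≤ n, 0 < lam i)
    (hmono : ∀ i j, i ≤ j → j ≤ n → lam i ≤ lam j)
    (hsum : ∑ i ∈ Finset.range (n + 1), lam i = m) :
    (∀ l ≤ m, ∃ I ⊆ Finset.range (n + 1), ∑ i ∈ I, lam i = l) ↔
    (∀ i ≤ n, lam i ≤ 1 + ∑ j ∈ Finset.range i, lam j) :=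
  weakM_iff_inequalities_general m n lam hmono hsum
end

section
/- If m = λ₀ + λ₁ + ⋯ + λₙ is an M-partition, then ⌊m/2⌋ ≤ λ₀ + λ₁ + ⋯ + λ_{n−1} ≤ min{⌊(m + 2^{n−1} − 1)/2⌋, 2^n − 1}. -/
/-!
Writing `Sₖ = λ₀ + ⋯ + λₖ₋₁`, the M-condition `λₖ ≤ 1 + Sₖ` says `Sₖ₊₁ + 1 ≤ 2 (Sₖ + 1)`, so
`Sₖ + 1 ≤ 2ᵏ`. The lower bound is `m = Sₙ + λₙ ≤ 2 Sₙ + 1`. For the other upper bound, monotonicity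
gives `λₙ₋₁ ≤ λₙ = m - Sₙ`, hence `2 Sₙ = Sₙ + Sₙ₋₁ + λₙ₋₁ ≤ m + Sₙ₋₁ ≤ m + 2ⁿ⁻¹ - 1`.
-/

open Finset

theorem sum_range_add_one_le_two_pow (lam : ℕ → ℕ) (k : ℕ)
    (hineq : ∀ i < k, lam i ≤ 1 + ∑ j ∈ range i, lam j) :
    ∑ i ∈ range k, lam i + 1 ≤ 2 ^ k := by
  induction k with
  | zero => simp
  | succ k ih =>
    have hsum := ih fun i hi => hineq i (Nat.lt_succ_of_lt hi)
    have hlast := hineq k (Nat.lt_succ_self k)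
    rw [sum_range_succ, pow_succ]
    omega

theorem two_mul_sum_range_add_one_le (lam : ℕ → ℕ) (n : ℕ)
    (hineq : ∀ i < n - 1, lam i ≤ 1 + ∑ j ∈ range i, lam j) (hmono : lam (n - 1) ≤ lam n) :
    2 * ∑ i ∈ range n, lam i + 1 ≤ ∑ i ∈ range (n + 1), lam i + 2 ^ (n - 1) := by
  cases n with
  | zero => simp
  | succ n =>
    have hsum := sum_range_add_one_le_two_pow lam n hineq
    simp only [add_tsub_cancel_right] at hmono ⊢
    rw [sum_range_succ _ (n + 1), sum_range_succ _ n]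
    omega

theorem partial_sum_bounds_general (m n : ℕ) (lam : ℕ → ℕ)
    (hmono : ∀ i j, i ≤ j → j ≤ n → lam i ≤ lam j)
    (hsum : ∑ i ∈ Finset.range (n + 1), lam i = m)
    (hineq : ∀ i ≤ n, lam i ≤ 1 + ∑ j ∈ Finset.range i, lam j) :
    m / 2 ≤ ∑ i ∈ Finset.range n, lam i ∧
    ∑ i ∈ Finset.range n, lam i ≤ min ((m + 2 ^ (n - 1) - 1) / 2) (2 ^ n - 1) := by
  have hlast := hineq n le_rfl
  have hpow := sum_range_add_one_le_two_pow lam n fun i hi => hineq i hi.le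
  have htwice := two_mul_sum_range_add_one_le lam n (fun i hi => hineq i (by omega))
    (hmono (n - 1) n (Nat.sub_le n 1) le_rfl)
  rw [sum_range_succ] at hsum htwice
  exact ⟨by omega, le_min (by omega) (by omega)⟩

/-- If m = λ₀ + ⋯ + λₙ is an M-partition, then
⌊m/2⌋ ≤ λ₀ + ⋯ + λ_{n−1} ≤ min{⌊(m + 2^{n−1} − 1)/2⌋, 2^n − 1}. -/
theorem partial_sum_bounds (m n : ℕ) (lam : ℕ → ℕ)
    (hpos : ∀ i ≤ n, 0 < lam i)
    (hmono : ∀ i j, i ≤ j → j ≤ n → lam i ≤ lam j)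
    (hsum : ∑ i ∈ Finset.range (n + 1), lam i = m)
    (hineq : ∀ i ≤ n, lam i ≤ 1 + ∑ j ∈ Finset.range i, lam j)
    (hbig : 2 ^ n ≤ m) :
    m / 2 ≤ ∑ i ∈ Finset.range n, lam i ∧
    ∑ i ∈ Finset.range n, lam i ≤ min ((m + 2 ^ (n - 1) - 1) / 2) (2 ^ n - 1) :=
  partial_sum_bounds_general m n lam hmono hsum hineq
end
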